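/- arXiv:0806.3260 — 2 statements merged into one kernel-verified Lean document; each statement's English description precedes it below -/
import Mathlib

section
/- Let A be an n×n complex invertible matrix, let r₀ ∈ ℂⁿ, let 1 ≤ m ≤ n−1, and let r be a GMRES(m) residual of A from r₀. If r ≠ 0, then the m+1 vectors r₀, A r₀, A² r₀, …, Aᵐ r₀ are linearly independent (i.e., the Krylov matrix K(A, r₀) has rank m+1). -/
/-! A linear dependence among `r₀, A r₀, …, Aᵐ r₀` is a nonzero polynomial `p` of degree at most
`m` with `p(A) r₀ = 0`. Since `A` is invertible, the factor `X ^ k` of `p` can be cancelled, and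
rescaling the quotient gives an admissible `q` with `q(0) = 1` and `q(A) r₀ = 0`; the minimal
residual norm is then zero. -/

open Polynomial Matrix

/-- The Euclidean (ℓ²) norm of a vector in ℂⁿ. -/
noncomputable def vecEnorm {n : ℕ} (v : Fin n → ℂ) : ℝ :=
  ‖(WithLp.equiv 2 (Fin n → ℂ)).symm v‖

/-- `s` is a GMRES(m) residual of `A` from `r`: there is a polynomial `p` of degree at most `m`
with `p 0 = 1` such that `s = p(A) r` and `‖s‖ ≤ ‖q(A) r‖` for all admissible `q`. -/
def IsGMRESResidual {n : ℕ} (m : ℕ) (A : Matrix (Fin n) (Fin n) ℂ)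
    (r s : Fin n → ℂ) : Prop :=
  ∃ p : ℂ[X], p.natDegree ≤ m ∧ p.eval 0 = 1 ∧ s = (aeval A p).mulVec r ∧
    ∀ q : ℂ[X], q.natDegree ≤ m → q.eval 0 = 1 →
      vecEnorm s ≤ vecEnorm ((aeval A q).mulVec r)

/-- The Krylov matrix `K(A, r) = [r, Ar, …, Aᵐ r]`, an `n × (m+1)` matrix. -/
noncomputable def krylov {n : ℕ} (m : ℕ) (A : Matrix (Fin n) (Fin n) ℂ) (r : Fin n → ℂ) :
    Matrix (Fin n) (Fin (m + 1)) ℂ :=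
  Matrix.of fun i j => (A ^ (j : ℕ)).mulVec r i

section KrylovDependence

variable {ι K : Type*} [Fintype ι] [DecidableEq ι] [Field K]

lemma aeval_sum_C_mul_X_pow_mulVec {m : ℕ} (A : Matrix ι ι K) (v : ι → K) (c : Fin (m + 1) → K) :
    aeval A (∑ j : Fin (m + 1), C (c j) * X ^ (j : ℕ)) *ᵥ v = ∑ j, c j • (A ^ (j : ℕ) *ᵥ v) := by
  simp only [map_sum, Matrix.sum_mulVec, _root_.map_mul, aeval_C, map_pow, aeval_X,
    ← Algebra.smul_def, Matrix.smul_mulVec]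

lemma exists_aeval_mulVec_eq_zero_of_not_linearIndependent {m : ℕ} {A : Matrix ι ι K}
    {v : ι → K} (h : ¬ LinearIndependent K fun j : Fin (m + 1) => A ^ (j : ℕ) *ᵥ v) :
    ∃ p : K[X], p ≠ 0 ∧ p.natDegree ≤ m ∧ aeval A p *ᵥ v = 0 := by
  obtain ⟨c, hc, i, hci⟩ := Fintype.not_linearIndependent_iff.mp h
  refine ⟨∑ j : Fin (m + 1), C (c j) * X ^ (j : ℕ), fun hp => hci ?_, ?_, ?_⟩
  · simpa [finsetSum_coeff, coeff_C_mul_X_pow, Fin.val_inj] using congrArg (coeff · (i : ℕ)) hp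
  · refine natDegree_sum_le_of_forall_le _ _ fun j _ => (natDegree_C_mul_X_pow_le _ _).trans ?_
    exact Nat.lt_succ_iff.mp j.isLt
  · rw [aeval_sum_C_mul_X_pow_mulVec, hc]

lemma exists_eval_zero_eq_one_of_aeval_mulVec_eq_zero {A : Matrix ι ι K} (hA : IsUnit A)
    {v : ι → K} {p : K[X]} (hp : p ≠ 0) (hpA : aeval A p *ᵥ v = 0) :
    ∃ q : K[X], q.natDegree ≤ p.natDegree ∧ q.eval 0 = 1 ∧ aeval A q *ᵥ v = 0 := by
  obtain ⟨q, hpq, hXq⟩ := p.exists_eq_pow_rootMultiplicity_mul_and_not_dvd hp 0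
  set k := p.rootMultiplicity 0
  rw [map_zero, sub_zero] at hpq hXq
  have hq0 : q.eval 0 ≠ 0 := fun h => hXq (X_dvd_iff.mpr (by rwa [coeff_zero_eq_eval_zero]))
  have hpA' : aeval A p = A ^ k * aeval A q := by
    rw [hpq, _root_.map_mul, map_pow, aeval_X]
  have hqA : aeval A q *ᵥ v = 0 := by
    apply Matrix.mulVec_injective_iff_isUnit.mpr (hA.pow k)
    rw [Matrix.mulVec_mulVec, Matrix.mulVec_zero, ← hpA', hpA]
  refine ⟨C (q.eval 0)⁻¹ * q, ?_, by simp [inv_mul_cancel₀ hq0], ?_⟩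
  · calc (C (q.eval 0)⁻¹ * q).natDegree ≤ q.natDegree := natDegree_C_mul_le _ _
      _ ≤ p.natDegree := natDegree_le_of_dvd (hpq ▸ dvd_mul_left q _) hp
  · rw [_root_.map_mul, ← Matrix.mulVec_mulVec, hqA, Matrix.mulVec_zero]

end KrylovDependence

lemma vecEnorm_eq_zero {n : ℕ} {v : Fin n → ℂ} : vecEnorm v = 0 ↔ v = 0 := by
  simp [vecEnorm]

lemma IsGMRESResidual.eq_zero_of_aeval_mulVec_eq_zero {n m : ℕ} {A : Matrix (Fin n) (Fin n) ℂ}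
    {r s : Fin n → ℂ} (hs : IsGMRESResidual m A r s) {q : ℂ[X]} (hq : q.natDegree ≤ m)
    (hq0 : q.eval 0 = 1) (hqA : aeval A q *ᵥ r = 0) : s = 0 := by
  obtain ⟨-, -, -, -, hmin⟩ := hs
  have hle := hmin q hq hq0
  rw [hqA, vecEnorm_eq_zero.mpr rfl] at hle
  exact vecEnorm_eq_zero.mp (le_antisymm hle (norm_nonneg _))

theorem krylov_full_rank_of_residual_ne_zero_general {n : ℕ} (m : ℕ)
    (A : Matrix (Fin n) (Fin n) ℂ) (hA : IsUnit A) (r₀ r : Fin n → ℂ)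
    (hres : IsGMRESResidual m A r₀ r) (hr : r ≠ 0) :
    LinearIndependent ℂ (fun j : Fin (m + 1) => (A ^ (j : ℕ)).mulVec r₀) := by
  by_contra hdep
  obtain ⟨p, hp, hpm, hpA⟩ := exists_aeval_mulVec_eq_zero_of_not_linearIndependent hdep
  obtain ⟨q, hqp, hq0, hqA⟩ := exists_eval_zero_eq_one_of_aeval_mulVec_eq_zero hA hp hpA
  exact hr (hres.eq_zero_of_aeval_mulVec_eq_zero (hqp.trans hpm) hq0 hqA)

/-- If the GMRES(m) residual of an invertible `A` from `r₀` is nonzero, then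
`r₀, A r₀, …, Aᵐ r₀` are linearly independent (the Krylov matrix has full column rank). -/
theorem krylov_full_rank_of_residual_ne_zero {n : ℕ} (m : ℕ) (hm : 1 ≤ m) (hmn : m ≤ n - 1)
    (A : Matrix (Fin n) (Fin n) ℂ) (hA : IsUnit A) (r₀ r : Fin n → ℂ)
    (hres : IsGMRESResidual m A r₀ r) (hr : r ≠ 0) :
    LinearIndependent ℂ (fun j : Fin (m + 1) => (A ^ (j : ℕ)).mulVec r₀) :=
  krylov_full_rank_of_residual_ne_zero_general m A hA r₀ r hres hr
end

section
/- Let A be an n×n complex invertible matrix that is diagonalizable as A = V Λ V⁻¹ with Λ diagonal and V invertible, and let 1 ≤ m ≤ n−1. Let r_k ∈ ℂⁿ, let p_k ∈ ℂ[z] with deg p_k ≤ m and p_k(0) = 1 be a polynomial such that r_{k+1} := p_k(A) r_k satisfies ‖r_{k+1}‖ ≤ ‖q(A) r_k‖ for every polynomial q with deg q ≤ m and q(0) = 1 (so r_{k+1} is a GMRES(m) residual of A from r_k with GMRES polynomial p_k), and let r̂_{k+1} be a GMRES(m) residual of Aᴴ from r_k. Then ‖r̂_{k+1}‖ ≤ α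 (‖r_{k+1}‖ + β_k), where α = ‖V⁻¹‖² (the square of the spectral operator norm of V⁻¹, equivalently 1/σ_min(V)² with σ_min(V) the smallest singular value of V) and β_k = ‖p_k(A)(I − V Vᴴ) r_k‖. -/
/-!
Write `p = p_k` and `D = p(Λ)`, so that `p(A) = V D V⁻¹`. The conjugate polynomial `p̄` is
admissible for `Aᴴ`, so `‖r̂_{k+1}‖ ≤ ‖p̄(Aᴴ) r‖`, and `p̄(Aᴴ) = p(A)ᴴ = V⁻ᴴ D̄ Vᴴ`. Since `D̄`
and `D` are diagonal with entries of equal modulus,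
`‖p(A)ᴴ r‖ ≤ ‖V⁻¹‖ ‖D Vᴴ r‖ = ‖V⁻¹‖ ‖V⁻¹ p(A) V Vᴴ r‖ ≤ ‖V⁻¹‖² ‖p(A) V Vᴴ r‖`,
and `p(A) V Vᴴ r = r_{k+1} - p(A) (I - V Vᴴ) r`.
-/

open Polynomial Matrix

open scoped Matrix.Norms.L2Operator

theorem Polynomial.aeval_units_conj {R A : Type*} [CommSemiring R] [Semiring A] [Algebra R A]
    (u : Aˣ) (a : A) (p : R[X]) :
    aeval (↑u * a * ↑u⁻¹) p = ↑u * aeval a p * ↑u⁻¹ := by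
  simpa [ConjAct.units_smul_def] using
    aeval_algHom_apply (MulSemiringAction.toAlgHom R A (ConjAct.toConjAct u)) a p

theorem Polynomial.aeval_star_map {R A : Type*} [CommSemiring R] [StarRing R] [Semiring A]
    [StarRing A] [Algebra R A] [StarModule R A] (a : A) (p : R[X]) :
    aeval (star a) (p.map (starRingEnd R)) = star (aeval a p) := by
  induction p using Polynomial.induction_on' with
  | add p q hp hq => simp [hp, hq]
  | monomial k c =>
    simp [aeval_monomial, Algebra.algebraMap_eq_smul_one, star_pow, starRingEnd_apply]

theorem Matrix.aeval_diagonal {n R : Type*} [Fintype n] [DecidableEq n] [CommSemiring R]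
    (d : n → R) (p : R[X]) : aeval (diagonal d) p = diagonal fun i => p.eval (d i) := by
  simpa [aeval_pi_apply] using aeval_algHom_apply (diagonalAlgHom R) d p

theorem Matrix.aeval_conj_nonsing_inv {n R : Type*} [Fintype n] [DecidableEq n] [CommRing R]
    {V : Matrix n n R} (hV : IsUnit V) (L : Matrix n n R) (p : R[X]) :
    aeval (V * L * V⁻¹) p = V * aeval L p * V⁻¹ := by
  simpa [coe_units_inv] using aeval_units_conj hV.unit L p

theorem vecEnorm_mulVec_le {n : ℕ} (M : Matrix (Fin n) (Fin n) ℂ) (v : Fin n → ℂ) :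
    vecEnorm (M *ᵥ v) ≤ ‖M‖ * vecEnorm v :=
  M.l2_opNorm_mulVec _

theorem vecEnorm_sub_le {n : ℕ} (u v : Fin n → ℂ) : vecEnorm (u - v) ≤ vecEnorm u + vecEnorm v :=
  norm_sub_le _ _

theorem vecEnorm_diagonal_star_mulVec {n : ℕ} (e v : Fin n → ℂ) :
    vecEnorm (diagonal (star e) *ᵥ v) = vecEnorm (diagonal e *ᵥ v) := by
  simp [vecEnorm, EuclideanSpace.norm_eq, mulVec_diagonal]

theorem IsGMRESResidual.vecEnorm_le {n m : ℕ} {A : Matrix (Fin n) (Fin n) ℂ} {r s : Fin n → ℂ}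
    (h : IsGMRESResidual m A r s) {q : ℂ[X]} (hq : q.natDegree ≤ m) (hq0 : q.eval 0 = 1) :
    vecEnorm s ≤ vecEnorm (aeval A q *ᵥ r) := by
  obtain ⟨p, -, -, -, hp⟩ := h
  exact hp q hq hq0

theorem vecEnorm_conjTranspose_mulVec_le {n : ℕ} {V : Matrix (Fin n) (Fin n) ℂ} (hV : IsUnit V)
    (e r : Fin n → ℂ) :
    vecEnorm ((V * diagonal e * V⁻¹)ᴴ *ᵥ r) ≤
      ‖V⁻¹‖ ^ 2 * vecEnorm ((V * diagonal e * V⁻¹) *ᵥ (V * Vᴴ) *ᵥ r) := by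
  have hVV : V⁻¹ * V = 1 := nonsing_inv_mul V ((isUnit_iff_isUnit_det V).mp hV)
  have hdiag : diagonal e *ᵥ Vᴴ *ᵥ r = V⁻¹ *ᵥ (V * diagonal e * V⁻¹) *ᵥ (V * Vᴴ) *ᵥ r := by
    simp only [mulVec_mulVec, ← Matrix.mul_assoc, hVV, Matrix.one_mul]
    simp only [Matrix.mul_assoc, hVV, Matrix.mul_one]
  calc vecEnorm ((V * diagonal e * V⁻¹)ᴴ *ᵥ r)
      = vecEnorm (V⁻¹ᴴ *ᵥ diagonal (star e) *ᵥ Vᴴ *ᵥ r) := by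
        simp [conjTranspose_mul, mulVec_mulVec, Matrix.mul_assoc]
    _ ≤ ‖V⁻¹‖ * vecEnorm (diagonal (star e) *ᵥ Vᴴ *ᵥ r) := by
        rw [← l2_opNorm_conjTranspose V⁻¹]; exact vecEnorm_mulVec_le _ _
    _ = ‖V⁻¹‖ * vecEnorm (V⁻¹ *ᵥ (V * diagonal e * V⁻¹) *ᵥ (V * Vᴴ) *ᵥ r) := by
        rw [vecEnorm_diagonal_star_mulVec, hdiag]
    _ ≤ ‖V⁻¹‖ * (‖V⁻¹‖ * vecEnorm ((V * diagonal e * V⁻¹) *ᵥ (V * Vᴴ) *ᵥ r)) := by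
        gcongr; exact vecEnorm_mulVec_le _ _
    _ = ‖V⁻¹‖ ^ 2 * vecEnorm ((V * diagonal e * V⁻¹) *ᵥ (V * Vᴴ) *ᵥ r) := by
        ring

theorem gmres_residual_conjTranspose_bound_diagonalizable_general {n : ℕ} (m : ℕ)
    (A V Lam : Matrix (Fin n) (Fin n) ℂ) (hV : IsUnit V)
    (hLam : Lam.IsDiag) (hdecomp : A = V * Lam * V⁻¹)
    (rk rkp1 rhat : Fin n → ℂ) (pk : ℂ[X])
    (hdeg : pk.natDegree ≤ m) (hpk0 : pk.eval 0 = 1)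
    (hrkp1 : rkp1 = (aeval A pk).mulVec rk)
    (hrhat : IsGMRESResidual m Aᴴ rk rhat) :
    vecEnorm rhat ≤ ‖V⁻¹‖ ^ 2 *
      (vecEnorm rkp1 + vecEnorm ((aeval A pk).mulVec ((1 - V * Vᴴ).mulVec rk))) := by
  obtain ⟨d, rfl⟩ : ∃ d, Lam = diagonal d := ⟨_, hLam.diagonal_diag.symm⟩
  have hP : aeval A pk = V * diagonal (fun i => pk.eval (d i)) * V⁻¹ := by
    rw [hdecomp, aeval_conj_nonsing_inv hV, aeval_diagonal]
  have hsplit : aeval A pk *ᵥ (V * Vᴴ) *ᵥ rk =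
      rkp1 - aeval A pk *ᵥ (1 - V * Vᴴ) *ᵥ rk := by
    rw [hrkp1, ← mulVec_sub, sub_mulVec, one_mulVec, sub_sub_cancel]
  calc vecEnorm rhat ≤ vecEnorm ((aeval A pk)ᴴ *ᵥ rk) := by
        rw [← star_eq_conjTranspose, ← aeval_star_map]
        exact hrhat.vecEnorm_le (natDegree_map_le.trans hdeg)
          (by rw [eval_zero_map, hpk0, map_one])
    _ ≤ ‖V⁻¹‖ ^ 2 * vecEnorm (aeval A pk *ᵥ (V * Vᴴ) *ᵥ rk) := by
        rw [hP]; exact vecEnorm_conjTranspose_mulVec_le hV _ rk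
    _ ≤ _ := by
        rw [hsplit]; gcongr; exact vecEnorm_sub_le _ _

/-- Near-normality bound, single cycle: for a diagonalizable `A = V Λ V⁻¹`, the GMRES(m)
residual `r̂_{k+1}` of `Aᴴ` from `r_k` satisfies `‖r̂_{k+1}‖ ≤ α (‖r_{k+1}‖ + β_k)`, where
`α = ‖V⁻¹‖²` (spectral operator norm) and `β_k = ‖p_k(A)(I - V Vᴴ) r_k‖`. -/
theorem gmres_residual_conjTranspose_bound_diagonalizable {n : ℕ} (m : ℕ)
    (hm : 1 ≤ m) (hmn : m ≤ n - 1)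
    (A V Lam : Matrix (Fin n) (Fin n) ℂ) (hA : IsUnit A) (hV : IsUnit V)
    (hLam : Lam.IsDiag) (hdecomp : A = V * Lam * V⁻¹)
    (rk rkp1 rhat : Fin n → ℂ) (pk : ℂ[X])
    (hdeg : pk.natDegree ≤ m) (hpk0 : pk.eval 0 = 1)
    (hrkp1 : rkp1 = (aeval A pk).mulVec rk)
    (hmin : ∀ q : ℂ[X], q.natDegree ≤ m → q.eval 0 = 1 →
      vecEnorm rkp1 ≤ vecEnorm ((aeval A q).mulVec rk))
    (hrhat : IsGMRESResidual m Aᴴ rk rhat) :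
    vecEnorm rhat ≤ ‖V⁻¹‖ ^ 2 *
      (vecEnorm rkp1 + vecEnorm ((aeval A pk).mulVec ((1 - V * Vᴴ).mulVec rk))) :=
  gmres_residual_conjTranspose_bound_diagonalizable_general m A V Lam hV hLam hdecomp rk rkp1 rhat
    pk hdeg hpk0 hrkp1 hrhat
end
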